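/- The operation A ◇ B = (A − B)* − A* − B* on 3×3 matrices is bilinear in each argument: A ◇ (βB + γC) = β(A ◇ B) + γ(A ◇ C) for scalars β, γ. -/

import Mathlib

/-!
The entries of the adjugate of a 3×3 matrix are signed 2×2 minors, and the determinant of a
2×2 matrix is quadratic with polarization `det (X + Y) - det X - det Y = tr (adj X * Y)`.
Hence `adj (A + B) = adj A + adj B + P A B` with `P A` linear, and since `adj (-B) = adj B`,
`A ◇ B = -P A B` is linear in `B`.
-/

open Matrix

namespace Matrix

variable {R : Type*} [CommRing R]

theorem det_fin_two_add (X Y : Matrix (Fin 2) (Fin 2) R) :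
    (X + Y).det = X.det + Y.det + (adjugate X * Y).trace := by
  simp only [det_fin_two, adjugate_fin_two, trace_fin_two, add_apply, mul_apply, Fin.sum_univ_two,
    of_apply, cons_val', cons_val_zero, cons_val_one, empty_val', cons_val_fin_one]
  ring

def polarAdjugate (A : Matrix (Fin 3) (Fin 3) R) :
    Matrix (Fin 3) (Fin 3) R →ₗ[R] Matrix (Fin 3) (Fin 3) R where
  toFun B := of fun i j => (-1) ^ (j + i : ℕ) *
    (adjugate (A.submatrix j.succAbove i.succAbove) * B.submatrix j.succAbove i.succAbove).trace
  map_add' B C := by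
    ext i j
    simp only [submatrix_add, Pi.add_apply, trace_add, mul_add, of_apply, add_apply]
  map_smul' r B := by
    ext i j
    simp only [submatrix_smul, Pi.smul_apply, Matrix.mul_smul, trace_smul, of_apply, smul_apply,
      smul_eq_mul, RingHom.id_apply]
    ring

theorem adjugate_fin_three_add (A B : Matrix (Fin 3) (Fin 3) R) :
    adjugate (A + B) = adjugate A + adjugate B + polarAdjugate A B := by
  ext i j
  simp only [add_apply, adjugate_fin_succ_eq_det_submatrix, submatrix_add, Pi.add_apply,
    det_fin_two_add, polarAdjugate, LinearMap.coe_mk, AddHom.coe_mk, of_apply]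
  ring

theorem adjugate_fin_three_neg (A : Matrix (Fin 3) (Fin 3) R) : adjugate (-A) = adjugate A := by
  rw [← neg_one_smul R A, adjugate_smul]
  simp

theorem adjugate_fin_three_sub_sub_adjugate_sub_adjugate (A B : Matrix (Fin 3) (Fin 3) R) :
    (A - B).adjugate - A.adjugate - B.adjugate = -polarAdjugate A B := by
  rw [sub_eq_add_neg A B, adjugate_fin_three_add, adjugate_fin_three_neg, map_neg]
  abel

end Matrix

theorem diamond_bilinear {R : Type*} [CommRing R]
    (A B C : Matrix (Fin 3) (Fin 3) R) (β γ : R) :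
    (A - (β • B + γ • C)).adjugate - A.adjugate - (β • B + γ • C).adjugate =
      β • ((A - B).adjugate - A.adjugate - B.adjugate)
        + γ • ((A - C).adjugate - A.adjugate - C.adjugate) := by
  simp only [adjugate_fin_three_sub_sub_adjugate_sub_adjugate, map_add, map_smul, smul_neg,
    neg_add]
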